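/- Let ν be a non-degenerate probability measure with support bounded above by b, G its Cauchy transform, and K the compositional inverse of G on (0, G(b)) (so G(K(x)) = x). Then the R-transform 𝓡(x) = K(x) - 1/x is strictly increasing on (0, G(b)). -/

import Mathlib

/-!
Put `G = cauchyTransform ν` and fix `b < u < v`. With `c = u - 1 / G u`, the Dirac mass `δ_c` has
the same Cauchy transform as `ν` at `u`. Since `1 / (u - x) ↦ 1 / (v - x)` is strictly concave,
Jensen gives `G v < 1 / (v - c)` unless `ν = δ_c`, i.e. `v - u < 1 / G v - 1 / G u`. So
`z ↦ 1 / G z - z` is strictly increasing while `G` is strictly decreasing, and because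
`K (G z) - 1 / G z = -(1 / G z - z)`, the R-transform is strictly increasing.
-/

open MeasureTheory Real Set Filter

section

variable {α : Type*} [MeasurableSpace α] {μ : Measure α} {f : α → ℝ}

lemma integral_pos_of_ae_pos [NeZero μ] (hfi : Integrable f μ) (hf : ∀ᵐ x ∂μ, 0 < f x) :
    0 < ∫ x, f x ∂μ := by
  have hnn : 0 ≤ᵐ[μ] f := hf.mono fun _ hx => hx.le
  refine (integral_nonneg_of_ae hnn).lt_of_ne fun h0 => ?_
  obtain ⟨x, hx0, hx⟩ := (((integral_eq_zero_iff_of_nonneg_ae hnn hfi).mp h0.symm).and hf).exists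
  exact hx.ne' hx0

lemma integral_pos_of_ne_dirac [IsProbabilityMeasure μ] {c : α} (hc : μ ≠ Measure.dirac c)
    (hfi : Integrable f μ) (hnn : 0 ≤ᵐ[μ] f) (hf : ∀ᵐ x ∂μ, x ≠ c → 0 < f x) :
    0 < ∫ x, f x ∂μ := by
  refine (integral_nonneg_of_ae hnn).lt_of_ne fun h0 => hc ?_
  have hconst : ∀ᵐ x ∂μ, x = c := by
    filter_upwards [(integral_eq_zero_iff_of_nonneg_ae hnn hfi).mp h0.symm, hf] with x hx0 hx
    by_contra hxc
    exact (hx hxc).ne' hx0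
  simpa using (ProbabilityTheory.hasLaw_dirac_of_ae_eq (X := id) hconst).map_eq

end

-- Exact remainder of the tangent line at `x = c` of the concave map `1 / (u - x) ↦ 1 / (v - x)`,
-- whose slope there is `((u - c) / (v - c)) ^ 2`.
lemma one_div_sub_tangent_remainder {u v c x : ℝ} (hxu : x ≠ u) (hcu : c ≠ u) (hxv : x ≠ v)
    (hcv : c ≠ v) :
    1 / (v - c) - 1 / (v - x) - ((u - c) / (v - c)) ^ 2 * (1 / (u - c) - 1 / (u - x))
      = (v - u) * (x - c) ^ 2 / ((v - c) ^ 2 * (v - x) * (u - x)) := by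
  have := sub_ne_zero.mpr hxu
  have := sub_ne_zero.mpr hcu
  have := sub_ne_zero.mpr hxv
  have := sub_ne_zero.mpr hcv
  field_simp
  ring

noncomputable def cauchyTransform (ν : Measure ℝ) (z : ℝ) : ℝ := ∫ x, 1 / (z - x) ∂ν

section

variable {ν : Measure ℝ} {b : ℝ}

lemma integrable_one_div_sub [IsFiniteMeasure ν] (hsupp : ∀ᵐ x ∂ν, x ≤ b) {z : ℝ} (hz : b < z) :
    Integrable (fun x => 1 / (z - x)) ν := by
  refine .of_bound (by fun_prop : Measurable fun x : ℝ => 1 / (z - x)).aestronglyMeasurable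
    (1 / (z - b)) ?_
  filter_upwards [hsupp] with x hx
  rw [norm_of_nonneg (one_div_nonneg.mpr (by linarith))]
  gcongr

lemma cauchyTransform_pos [IsFiniteMeasure ν] [NeZero ν] (hsupp : ∀ᵐ x ∂ν, x ≤ b) {z : ℝ}
    (hz : b < z) : 0 < cauchyTransform ν z :=
  integral_pos_of_ae_pos (integrable_one_div_sub hsupp hz) <| by
    filter_upwards [hsupp] with x hx
    exact one_div_pos.mpr (by linarith)

variable [IsProbabilityMeasure ν]

lemma cauchyTransform_lt_one_div_sub {c u v : ℝ} (hc : ν ≠ Measure.dirac c)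
    (hsupp : ∀ᵐ x ∂ν, x ≤ b) (hu : b < u) (hcu : c < u) (huv : u < v)
    (hGu : cauchyTransform ν u = 1 / (u - c)) :
    cauchyTransform ν v < 1 / (v - c) := by
  have hcv : c < v := hcu.trans huv
  have hIu : Integrable (fun x => 1 / (u - c) - 1 / (u - x)) ν :=
    (integrable_const _).sub (integrable_one_div_sub hsupp hu)
  have hIv : Integrable (fun x => 1 / (v - c) - 1 / (v - x)) ν :=
    (integrable_const _).sub (integrable_one_div_sub hsupp (hu.trans huv))
  set r : ℝ → ℝ := fun x => 1 / (v - c) - 1 / (v - x)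
    - ((u - c) / (v - c)) ^ 2 * (1 / (u - c) - 1 / (u - x))
  have hr_integral : ∫ x, r x ∂ν = 1 / (v - c) - cauchyTransform ν v := by
    rw [integral_sub hIv (hIu.const_mul _), integral_const_mul,
      integral_sub (integrable_const _) (integrable_one_div_sub hsupp (hu.trans huv)),
      integral_sub (integrable_const _) (integrable_one_div_sub hsupp hu)]
    simp [cauchyTransform, ← hGu]
  have hr_sign : ∀ᵐ x ∂ν, 0 ≤ r x ∧ (x ≠ c → 0 < r x) := by
    filter_upwards [hsupp] with x hx
    have : 0 < v - u := by linarith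
    have : 0 < v - x := by linarith
    have : 0 < u - x := by linarith
    rw [show r x = _ from one_div_sub_tangent_remainder (by linarith) hcu.ne (by linarith) hcv.ne]
    exact ⟨by positivity, fun hxc => by have := sub_ne_zero.mpr hxc; positivity⟩
  have hr_pos : 0 < ∫ x, r x ∂ν :=
    integral_pos_of_ne_dirac hc (hIv.sub (hIu.const_mul _)) (hr_sign.mono fun _ h => h.1)
      (hr_sign.mono fun _ h => h.2)
  linarith

lemma sub_lt_one_div_cauchyTransform_sub (hnd : ∀ c : ℝ, ν ≠ Measure.dirac c)
    (hsupp : ∀ᵐ x ∂ν, x ≤ b) {u v : ℝ} (hu : b < u) (huv : u < v) :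
    v - u < 1 / cauchyTransform ν v - 1 / cauchyTransform ν u := by
  have hGu := cauchyTransform_pos hsupp hu
  have hlt := cauchyTransform_lt_one_div_sub (hnd (u - 1 / cauchyTransform ν u)) hsupp hu
    (by linarith [one_div_pos.mpr hGu]) huv (by simp)
  rw [lt_one_div (cauchyTransform_pos hsupp (hu.trans huv)) (by linarith [one_div_pos.mpr hGu])]
    at hlt
  linarith

lemma strictMonoOn_one_div_cauchyTransform_sub (hnd : ∀ c : ℝ, ν ≠ Measure.dirac c)
    (hsupp : ∀ᵐ x ∂ν, x ≤ b) :
    StrictMonoOn (fun z => 1 / cauchyTransform ν z - z) (Ioi b) := fun u hu _ _ huv => by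
  linarith [sub_lt_one_div_cauchyTransform_sub hnd hsupp hu huv]

lemma strictAntiOn_cauchyTransform (hnd : ∀ c : ℝ, ν ≠ Measure.dirac c)
    (hsupp : ∀ᵐ x ∂ν, x ≤ b) : StrictAntiOn (cauchyTransform ν) (Ioi b) := fun u hu v hv huv => by
  have := sub_lt_one_div_cauchyTransform_sub hnd hsupp hu huv
  exact (one_div_lt_one_div (cauchyTransform_pos hsupp hu) (cauchyTransform_pos hsupp hv)).mp
    (by linarith)

end

/-- If K is the compositional inverse of the Cauchy transform G
of a non-degenerate ν supported in (-∞,b], then the R-transform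
𝓡(x) = K(x) - 1/x is strictly increasing on (0, G(b)) = G '' (b,∞). -/
theorem stmt16 (ν : Measure ℝ) [IsProbabilityMeasure ν]
    (hnd : ∀ c : ℝ, ν ≠ Measure.dirac c) (b : ℝ)
    (hsupp : ∀ᵐ x ∂ν, x ≤ b) (K : ℝ → ℝ)
    (hK : ∀ z ∈ Ioi b, K (∫ x, 1 / (z - x) ∂ν) = z) :
    StrictMonoOn (fun x => K x - 1 / x)
      ((fun z => ∫ x, 1 / (z - x) ∂ν) '' Ioi b) := by
  rintro _ ⟨z₁, hz₁, rfl⟩ _ ⟨z₂, hz₂, rfl⟩ hlt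
  have hz : z₂ < z₁ := ((strictAntiOn_cauchyTransform hnd hsupp).lt_iff_gt hz₁ hz₂).mp hlt
  have hmono := strictMonoOn_one_div_cauchyTransform_sub hnd hsupp hz₂ hz₁ hz
  simp only [cauchyTransform] at hmono
  simp only [hK z₁ hz₁, hK z₂ hz₂]
  linarith
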